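/- Soundness of the safety value level set: if there exists a control sequence u : ℕ → U with l (traj x u k) ≥ 0 for all k ≤ K, then V_K x ≥ 0. In other words, the K-step viable set is contained in the super-zero level set of V_K. -/

import Mathlib

def traj {X U : Type*} (f : X → U → X) (x : X) (u : ℕ → U) : ℕ → X
  | 0 => x
  | k + 1 => f (traj f x u k) (u k)

noncomputable def safetyVal {X U : Type*} (f : X → U → X) (l : X → ℝ) : ℕ → X → ℝ
  | 0, x => l x
  | K + 1, x => min (l x) (⨆ u : U, safetyVal f l K (f x u))

theorem traj_succ_eq_traj_tail {X U : Type*} (f : X → U → X) (x : X) (u : ℕ → U) (k : ℕ) :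
    traj f x u (k + 1) = traj f (f x (u 0)) (fun n => u (n + 1)) k := by
  induction k with
  | zero => rfl
  | succ k ih => rw [traj, ih, traj]

theorem safetyVal_nonneg_of_safe_traj_general {X U : Type*} (f : X → U → X) (l : X → ℝ)
    (K : ℕ) (x : X)
    (hx : ∃ u : ℕ → U, ∀ k ≤ K, l (traj f x u k) ≥ 0) :
    safetyVal f l K x ≥ 0 := by
  induction K generalizing x with
  | zero =>
    obtain ⟨u, hu⟩ := hx
    exact hu 0 le_rfl
  | succ K ih =>
    obtain ⟨u, hu⟩ := hx
    have h_next : 0 ≤ safetyVal f l K (f x (u 0)) :=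
      ih _ ⟨fun n => u (n + 1), fun k hk => traj_succ_eq_traj_tail f x u k ▸ hu (k + 1) (by omega)⟩
    -- In `ℝ` an unbounded `⨆` is `0`, so a single nonnegative term suffices.
    exact le_min (hu 0 K.succ.zero_le) (Real.iSup_nonneg' ⟨u 0, h_next⟩)

theorem safetyVal_nonneg_of_safe_traj {X U : Type*} [Nonempty U] (f : X → U → X) (l : X → ℝ)
    (hbdd : ∃ M : ℝ, ∀ x : X, l x ≤ M) (K : ℕ) (x : X)
    (hx : ∃ u : ℕ → U, ∀ k ≤ K, l (traj f x u k) ≥ 0) :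
    safetyVal f l K x ≥ 0 :=
  safetyVal_nonneg_of_safe_traj_general f l K x hx
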